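/- arXiv:1904.01962 — 2 statements merged into one kernel-verified Lean document; each statement's English description precedes it below -/
import Mathlib

section
/- The RepSet architecture is invariant to the permutation of the elements of the input set: let v : Fin n → (Fin d → ℝ) be an input set of vectors, let H^(1), …, H^(m) be hidden sets where the k-th hidden set consists of vectors u^(k) : Fin (n_k) → (Fin d → ℝ), let f(a, b) = max(⟨a, b⟩, 0) (ReLU of the Euclidean inner product), and define x ∈ ℝ^m by x_k = M(fun i j => f (v i) (u^(k) j)). Then for every matrix W : Fin C → Fin m → ℝ, every bias b : Fin C → ℝ, and every permutation π of Fin n, the output softmax(W x' + b) computed from the permuted input v ∘ π (giving x'_k = M(fun i j => f (v (π i)) (u^(k) j))) equals the output softmax(W x + b) computed from v; here softmax(r)_j = exp(r_j) / ∑_l exp(r_l). -/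
/-- The exact matching polytope `P(m,n)`. -/
def matchingPolytope (m n : ℕ) : Set (Fin m → Fin n → ℝ) :=
  {z | (∀ i j, 0 ≤ z i j) ∧ (∀ j, ∑ i, z i j ≤ 1) ∧ (∀ i, ∑ j, z i j ≤ 1)}

/-- The exact matching value `M(c)`. -/
noncomputable def matchingValue {m n : ℕ} (c : Fin m → Fin n → ℝ) : ℝ :=
  sSup ((fun z => ∑ i, ∑ j, z i j * c i j) '' matchingPolytope m n)

lemma comp_perm_mem_matchingPolytope {m n : ℕ} (π : Equiv.Perm (Fin m))
    {z : Fin m → Fin n → ℝ} (hz : z ∈ matchingPolytope m n) :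
    (fun i => z (π i)) ∈ matchingPolytope m n := by
  obtain ⟨hnonneg, hcol, hrow⟩ := hz
  refine ⟨fun i j => hnonneg _ _, fun j => ?_, fun i => hrow _⟩
  rw [Equiv.sum_comp π (fun i => z i j)]
  exact hcol j

lemma matchingValue_comp_perm {m n : ℕ} (c : Fin m → Fin n → ℝ) (π : Equiv.Perm (Fin m)) :
    matchingValue (fun i j => c (π i) j) = matchingValue c := by
  unfold matchingValue
  congr 1
  ext y
  constructor
  · rintro ⟨z, hz, rfl⟩
    refine ⟨fun i => z (π.symm i), comp_perm_mem_matchingPolytope π.symm hz, ?_⟩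
    simpa using (Equiv.sum_comp π (fun i => ∑ j, z (π.symm i) j * c i j)).symm
  · rintro ⟨z, hz, rfl⟩
    exact ⟨fun i => z (π i), comp_perm_mem_matchingPolytope π hz,
      Equiv.sum_comp π (fun i => ∑ j, z i j * c i j)⟩

theorem repset_permutation_invariant_general {n d m C : ℕ}
    (v : Fin n → Fin d → ℝ) (nk : Fin m → ℕ)
    (u : (k : Fin m) → Fin (nk k) → Fin d → ℝ)
    (W : Fin C → Fin m → ℝ) (b : Fin C → ℝ) (π : Equiv.Perm (Fin n)) :
    let f : (Fin d → ℝ) → (Fin d → ℝ) → ℝ := fun a b' => max (∑ t, a t * b' t) 0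
    let x : Fin m → ℝ := fun k => matchingValue (fun i j => f (v i) (u k j))
    let x' : Fin m → ℝ := fun k => matchingValue (fun i j => f (v (π i)) (u k j))
    let softmax : (Fin C → ℝ) → Fin C → ℝ :=
      fun r j => Real.exp (r j) / ∑ l, Real.exp (r l)
    softmax (fun j => (∑ l, W j l * x' l) + b j) =
      softmax (fun j => (∑ l, W j l * x l) + b j) := by
  intro f x x' softmax
  have hx : x' = x := funext fun k => matchingValue_comp_perm (fun i j => f (v i) (u k j)) π
  rw [hx]

/-- The RepSet architecture is invariant to the permutation of the elements of the
input set: the softmax output computed from the permuted input `v ∘ π` equals the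
softmax output computed from `v`. -/
theorem repset_permutation_invariant {n d m C : ℕ}
    (hn : 0 < n) (hd : 0 < d) (hm : 0 < m) (hC : 0 < C)
    (v : Fin n → Fin d → ℝ) (nk : Fin m → ℕ)
    (u : (k : Fin m) → Fin (nk k) → Fin d → ℝ)
    (W : Fin C → Fin m → ℝ) (b : Fin C → ℝ) (π : Equiv.Perm (Fin n)) :
    let f : (Fin d → ℝ) → (Fin d → ℝ) → ℝ := fun a b' => max (∑ t, a t * b' t) 0
    let x : Fin m → ℝ := fun k => matchingValue (fun i j => f (v i) (u k j))
    let x' : Fin m → ℝ := fun k => matchingValue (fun i j => f (v (π i)) (u k j))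
    let softmax : (Fin C → ℝ) → Fin C → ℝ :=
      fun r j => Real.exp (r j) / ∑ l, Real.exp (r l)
    softmax (fun j => (∑ l, W j l * x' l) + b j) =
      softmax (fun j => (∑ l, W j l * x l) + b j) :=
  repset_permutation_invariant_general v nk u W b π
end

section
/- The row-constrained relaxed problem (used when |X| < |Y|) has closed-form optimal value ∑_{i} max(0, max_j c i j): for every cost matrix c : Fin m → Fin n → ℝ, the supremum of ∑_{i,j} (z i j) * (c i j) over all z : Fin m → Fin n → ℝ with z i j ≥ 0 for all i, j and ∑_j z i j ≤ 1 for every i equals ∑_{i ∈ Fin m} max 0 (max over j ∈ Fin n of c i j). -/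
/-- The row-constrained relaxed problem (used when `|X| < |Y|`) has closed-form optimal
value `∑ i, max 0 (max_j c i j)`. -/
theorem row_relaxed_value_eq_sum_max {m n : ℕ} (hm : 0 < m) (hn : 0 < n)
    (c : Fin m → Fin n → ℝ) :
    sSup ((fun z => ∑ i, ∑ j, z i j * c i j) ''
        {z : Fin m → Fin n → ℝ | (∀ i j, 0 ≤ z i j) ∧ (∀ i, ∑ j, z i j ≤ 1)}) =
      ∑ i, max 0 (Finset.univ.sup' ⟨⟨0, hn⟩, Finset.mem_univ _⟩ (fun j => c i j)) := by
  have hne : (Finset.univ : Finset (Fin n)).Nonempty := ⟨⟨0, hn⟩, Finset.mem_univ _⟩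
  set M : Fin m → ℝ := fun i => Finset.univ.sup' hne (fun j => c i j) with hM
  choose jmax hjm using fun i =>
    Finset.exists_mem_eq_sup' hne (fun j => c i j)
  set z0 : Fin m → Fin n → ℝ := fun i j => if 0 ≤ M i ∧ j = jmax i then 1 else 0 with hz0def
  have hz0mem : z0 ∈ {z : Fin m → Fin n → ℝ | (∀ i j, 0 ≤ z i j) ∧ (∀ i, ∑ j, z i j ≤ 1)} := by
    constructor
    · intro i j; simp only [hz0def]; split <;> norm_num
    · intro i
      by_cases h : 0 ≤ M i
      · have : ∀ j, z0 i j = if j = jmax i then (1:ℝ) else 0 := by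
          intro j; simp [hz0def, h]
        simp only [this]
        rw [Finset.sum_ite_eq' Finset.univ (jmax i) (fun _ => (1:ℝ))]
        simp
      · have : ∀ j, z0 i j = 0 := by intro j; simp [hz0def, h]
        simp [this]
  have hval : ∑ i, ∑ j, z0 i j * c i j = ∑ i, max 0 (M i) := by
    apply Finset.sum_congr rfl
    intro i _
    by_cases h : 0 ≤ M i
    · have : ∀ j, z0 i j * c i j = if j = jmax i then c i j else 0 := by
        intro j; simp only [hz0def, h, true_and]; split <;> simp
      simp only [this]
      rw [Finset.sum_ite_eq' Finset.univ (jmax i) (fun j => c i j)]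
      simp only [max_eq_right h]
      simp only [Finset.mem_univ, if_true]
      exact ((hjm i).2).symm
    · have : ∀ j, z0 i j * c i j = 0 := by intro j; simp [hz0def, h]
      simp only [this, Finset.sum_const_zero]
      rw [max_eq_left (le_of_not_ge h)]
  have hub : ∀ x ∈ ((fun z => ∑ i, ∑ j, z i j * c i j) ''
      {z : Fin m → Fin n → ℝ | (∀ i j, 0 ≤ z i j) ∧ (∀ i, ∑ j, z i j ≤ 1)}),
      x ≤ ∑ i, max 0 (M i) := by
    rintro x ⟨z, ⟨hz0, hz1⟩, rfl⟩
    apply Finset.sum_le_sum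
    intro i _
    calc ∑ j, z i j * c i j ≤ ∑ j, z i j * max 0 (M i) := by
          apply Finset.sum_le_sum
          intro j _
          exact mul_le_mul_of_nonneg_left
            (le_trans (Finset.le_sup' (fun j => c i j) (Finset.mem_univ j)) (le_max_right _ _))
            (hz0 i j)
      _ = (∑ j, z i j) * max 0 (M i) := (Finset.sum_mul _ _ _).symm
      _ ≤ 1 * max 0 (M i) := mul_le_mul_of_nonneg_right (hz1 i) (le_max_left _ _)
      _ = max 0 (M i) := one_mul _
  apply le_antisymm
  · exact csSup_le ⟨_, ⟨z0, hz0mem, rfl⟩⟩ hub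
  · rw [← hval]
    exact le_csSup ⟨_, hub⟩ ⟨z0, hz0mem, rfl⟩
end
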